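/- Let n ≥ 3, let i, j ∈ {1,…,n−1} with |i−j| = 1, and let a ≥ 1. Then in the singular Hecke algebra H(SB_n): σ_j τ_i^a = τ_j^a (σ_i + σ_j − (q−1)) − τ_i^a (σ_i − (q−1)). -/

import Mathlib

noncomputable section
open scoped Classical

/-- `𝕂 = ℂ(q)`. -/
abbrev K : Type := RatFunc ℂ
/-- `𝕂(z)`. -/
abbrev Kz : Type := RatFunc K
/-- the variable `q`. -/
def q : K := RatFunc.X
/-- the variable `z`. -/
def z : Kz := RatFunc.X

/-- Generators of the singular braid monoid on `n` strands:
`s i` is `σ_{i+1}`, `si i` is `σ_{i+1}⁻¹`, `t i` is `τ_{i+1}` (0-indexed `i`). -/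
inductive SBGen (n : ℕ) : Type
  | s (i : Fin (n - 1))
  | si (i : Fin (n - 1))
  | t (i : Fin (n - 1))

/-- `|i - j| = 1`. -/
def adj {n : ℕ} (i j : Fin (n - 1)) : Prop := (i : ℕ) + 1 = (j : ℕ) ∨ (j : ℕ) + 1 = (i : ℕ)
/-- `|i - j| ≥ 2`. -/
def far {n : ℕ} (i j : Fin (n - 1)) : Prop := (i : ℕ) + 2 ≤ (j : ℕ) ∨ (j : ℕ) + 2 ≤ (i : ℕ)

open FreeMonoid in
/-- The defining relations of the singular braid monoid. -/
inductive SBRel (n : ℕ) : FreeMonoid (SBGen n) → FreeMonoid (SBGen n) → Prop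
  | inv_right (i) : SBRel n (of (.s i) * of (.si i)) 1
  | inv_left (i) : SBRel n (of (.si i) * of (.s i)) 1
  | sigma_tau (i) : SBRel n (of (.s i) * of (.t i)) (of (.t i) * of (.s i))
  | braid (i j) : adj i j →
      SBRel n (of (.s i) * of (.s j) * of (.s i)) (of (.s j) * of (.s i) * of (.s j))
  | braid_tau (i j) : adj i j →
      SBRel n (of (.s i) * of (.s j) * of (.t i)) (of (.t j) * of (.s i) * of (.s j))
  | ss_comm (i j) : far i j → SBRel n (of (.s i) * of (.s j)) (of (.s j) * of (.s i))
  | st_comm (i j) : far i j → SBRel n (of (.s i) * of (.t j)) (of (.t j) * of (.s i))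
  | tt_comm (i j) : far i j → SBRel n (of (.t i) * of (.t j)) (of (.t j) * of (.t i))

/-- The congruence generated by the singular braid relations. -/
def SBcon (n : ℕ) : Con (FreeMonoid (SBGen n)) := conGen (SBRel n)

/-- The singular braid monoid `SB_n`. -/
def SB (n : ℕ) : Type := (SBcon n).Quotient

instance (n : ℕ) : Monoid (SB n) := Con.monoid _

/-- The generator `σ_{i+1}` of `SB_n`. -/
def sσ {n : ℕ} (i : Fin (n - 1)) : SB n := (SBcon n).mk' (FreeMonoid.of (.s i))
/-- The generator `σ_{i+1}⁻¹` of `SB_n`. -/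
def sσi {n : ℕ} (i : Fin (n - 1)) : SB n := (SBcon n).mk' (FreeMonoid.of (.si i))
/-- The generator `τ_{i+1}` of `SB_n`. -/
def sτ {n : ℕ} (i : Fin (n - 1)) : SB n := (SBcon n).mk' (FreeMonoid.of (.t i))

/-- Number of singular points of a generator. -/
def genDeg {n : ℕ} : SBGen n → Multiplicative ℕ
  | .t _ => Multiplicative.ofAdd 1
  | _ => 1

/-- Number of singular points of a word. -/
def degF (n : ℕ) : FreeMonoid (SBGen n) →* Multiplicative ℕ := FreeMonoid.lift genDeg

lemma degF_rel {n : ℕ} : SBcon n ≤ Con.ker (degF n) := by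
  refine Con.conGen_le.mpr ?_
  rintro x y h
  rw [Con.ker_rel]
  cases h <;>
    simp [degF, genDeg, mul_comm]

/-- The number of singular points, as a monoid homomorphism. -/
def deg {n : ℕ} : SB n →* Multiplicative ℕ := Con.lift _ (degF n) degF_rel

/-- The number of singular points of a singular braid. -/
def ndeg {n : ℕ} (β : SB n) : ℕ := Multiplicative.toAdd (deg β)

/-- `S_d B_n` : the set of singular braids on `n` strands with `d` singular points. -/
def SdB (d n : ℕ) : Set (SB n) := {β | ndeg β = d}

lemma ndeg_mul {n : ℕ} (α β : SB n) : ndeg (α * β) = ndeg α + ndeg β := by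
  simp [ndeg, map_mul]

lemma ndeg_one {n : ℕ} : ndeg (1 : SB n) = 0 := by simp [ndeg]

lemma ndeg_pow {n : ℕ} (β : SB n) (m : ℕ) : ndeg (β ^ m) = m * ndeg β := by
  induction m with
  | zero => simp [ndeg_one]
  | succ m ih => rw [pow_succ, ndeg_mul, ih]; ring

lemma ndeg_sσ {n : ℕ} (i : Fin (n - 1)) : ndeg (sσ i) = 0 := rfl

lemma ndeg_sσi {n : ℕ} (i : Fin (n - 1)) : ndeg (sσi i) = 0 := by
  rfl

lemma ndeg_sτ {n : ℕ} (i : Fin (n - 1)) : ndeg (sτ i) = 1 := by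
  rfl

lemma mem_SdB {n d : ℕ} {β : SB n} (h : ndeg β = d) : β ∈ SdB d n := h
/-- The monoid algebra `𝕂[SB_n]`. -/
abbrev MA (n : ℕ) : Type := MonoidAlgebra K (SB n)

/-- The Hecke relations `σ_k² = (q-1)σ_k + q`. -/
def hrel (n : ℕ) : MA n → MA n → Prop := fun x y =>
  ∃ i : Fin (n - 1), x = (MonoidAlgebra.of K (SB n) (sσ i)) ^ 2 ∧
    y = (q - 1) • MonoidAlgebra.of K (SB n) (sσ i) + q • 1

/-- The singular Hecke algebra `H(SB_n)`. -/
def H (n : ℕ) : Type := RingQuot (hrel n)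

instance (n : ℕ) : Ring (H n) := inferInstanceAs (Ring (RingQuot (hrel n)))
instance (n : ℕ) : Algebra K (H n) := inferInstanceAs (Algebra K (RingQuot (hrel n)))

/-- The natural map `SB_n → H(SB_n)`. -/
def ιH {n : ℕ} (β : SB n) : H n := RingQuot.mkAlgHom K (hrel n) (MonoidAlgebra.of K (SB n) β)

/-- The image of `σ_{i+1}` in the singular Hecke algebra. -/
def σH {n : ℕ} (i : Fin (n - 1)) : H n := ιH (sσ i)
/-- The image of `τ_{i+1}` in the singular Hecke algebra. -/
def τH {n : ℕ} (i : Fin (n - 1)) : H n := ιH (sτ i)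

/-- Scalars inside the singular Hecke algebra. -/
def cK {n : ℕ} (c : K) : H n := algebraMap K (H n) c

/-- `H(S_d B_n)` : the 𝕂-subspace of `H(SB_n)` spanned by the braids with `d` singular points. -/
def HSd (d n : ℕ) : Submodule K (H n) := Submodule.span K (ιH '' SdB d n)

lemma ιH_mem {n d : ℕ} {β : SB n} (h : β ∈ SdB d n) : ιH β ∈ HSd d n :=
  Submodule.subset_span ⟨β, h, rfl⟩

/-- Map on generators realizing the inclusion `SB_n ↪ SB_{n+1}`. -/
def genMap {n : ℕ} : SBGen n → SBGen (n + 1)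
  | .s i => .s (Fin.castLE (by omega) i)
  | .si i => .si (Fin.castLE (by omega) i)
  | .t i => .t (Fin.castLE (by omega) i)

lemma incl_wd {n : ℕ} :
    SBcon n ≤ Con.ker ((SBcon (n + 1)).mk'.comp (FreeMonoid.map genMap)) := by
  refine Con.conGen_le.mpr ?_
  rintro x y h
  rw [Con.ker_rel]
  cases h with
  | inv_right i => exact (Con.eq _).mpr (ConGen.Rel.of _ _ (SBRel.inv_right _))
  | inv_left i => exact (Con.eq _).mpr (ConGen.Rel.of _ _ (SBRel.inv_left _))
  | sigma_tau i => exact (Con.eq _).mpr (ConGen.Rel.of _ _ (SBRel.sigma_tau _))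
  | braid i j hij =>
      refine (Con.eq _).mpr (ConGen.Rel.of _ _ (SBRel.braid _ _ ?_))
      simpa [adj] using hij
  | braid_tau i j hij =>
      refine (Con.eq _).mpr (ConGen.Rel.of _ _ (SBRel.braid_tau _ _ ?_))
      simpa [adj] using hij
  | ss_comm i j hij =>
      refine (Con.eq _).mpr (ConGen.Rel.of _ _ (SBRel.ss_comm _ _ ?_))
      simpa [far] using hij
  | st_comm i j hij =>
      refine (Con.eq _).mpr (ConGen.Rel.of _ _ (SBRel.st_comm _ _ ?_))
      simpa [far] using hij
  | tt_comm i j hij =>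
      refine (Con.eq _).mpr (ConGen.Rel.of _ _ (SBRel.tt_comm _ _ ?_))
      simpa [far] using hij

/-- The natural monoid homomorphism `SB_n → SB_{n+1}`. -/
def incl {n : ℕ} : SB n →* SB (n + 1) :=
  Con.lift _ ((SBcon (n + 1)).mk'.comp (FreeMonoid.map genMap)) incl_wd

lemma degF_genMap {n : ℕ} (w : FreeMonoid (SBGen n)) :
    degF (n + 1) (FreeMonoid.map genMap w) = degF n w := by
  change ((degF (n+1)).comp (FreeMonoid.map genMap)) w = degF n w
  refine DFunLike.congr_fun (FreeMonoid.hom_eq fun a => ?_) w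
  cases a <;> rfl

lemma ndeg_incl {n : ℕ} (β : SB n) : ndeg (incl β) = ndeg β := by
  induction β using Con.induction_on with
  | H w =>
    show Multiplicative.toAdd (degF (n + 1) (FreeMonoid.map genMap w)) =
      Multiplicative.toAdd (degF n w)
    rw [degF_genMap]

/-- The generator `σ_n` of `SB_{n+2}` (0-indexed `n`), used in the Markov condition. -/
def lastGen (n : ℕ) : Fin ((n + 2) - 1) := ⟨n, by omega⟩

/-- A collection of 𝕂-linear maps `H(S_d B_n) → 𝕂(z)`, `n ≥ 1`
(index `n` in the collection corresponds to `n+1` strands). -/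
abbrev TRc (d : ℕ) : Type := ∀ n : ℕ, HSd d (n + 1) →ₗ[K] Kz

/-- The Markov trace conditions. -/
def IsMarkov (d : ℕ) (T : TRc d) : Prop :=
  (∀ (n k l : ℕ) (α β : SB (n + 1)), α ∈ SdB k (n + 1) → β ∈ SdB l (n + 1) → k + l = d →
    ∀ (h₁ : ιH (α * β) ∈ HSd d (n + 1)) (h₂ : ιH (β * α) ∈ HSd d (n + 1)),
      T n ⟨ιH (α * β), h₁⟩ = T n ⟨ιH (β * α), h₂⟩) ∧
  (∀ (n : ℕ) (β : SB (n + 1)), β ∈ SdB d (n + 1) →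
    ∀ (h₁ : ιH (incl β) ∈ HSd d (n + 2)) (h₂ : ιH β ∈ HSd d (n + 1)),
      T (n + 1) ⟨ιH (incl β), h₁⟩ = T n ⟨ιH β, h₂⟩) ∧
  (∀ (n : ℕ) (β : SB (n + 1)), β ∈ SdB d (n + 1) →
    ∀ (h₁ : ιH (incl β * sσ (lastGen n)) ∈ HSd d (n + 2)) (h₂ : ιH β ∈ HSd d (n + 1)),
      T (n + 1) ⟨ιH (incl β * sσ (lastGen n)), h₁⟩ = z * T n ⟨ιH β, h₂⟩)

/-- `TR_d` : the 𝕂(z)-vector space of Markov traces on `{H(S_d B_n)}ₙ`. -/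
def TR (d : ℕ) : Submodule Kz (TRc d) where
  carrier := {T | IsMarkov d T}
  add_mem' := by
    rintro a b ⟨ha1, ha2, ha3⟩ ⟨hb1, hb2, hb3⟩
    refine ⟨?_, ?_, ?_⟩
    · intro n k l α β hα hβ hkl h₁ h₂
      simp only [Pi.add_apply, LinearMap.add_apply,
        ha1 n k l α β hα hβ hkl h₁ h₂, hb1 n k l α β hα hβ hkl h₁ h₂]
    · intro n β hβ h₁ h₂
      simp only [Pi.add_apply, LinearMap.add_apply, ha2 n β hβ h₁ h₂, hb2 n β hβ h₁ h₂]
    · intro n β hβ h₁ h₂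
      simp only [Pi.add_apply, LinearMap.add_apply, ha3 n β hβ h₁ h₂, hb3 n β hβ h₁ h₂]
      ring
  zero_mem' := by
    refine ⟨?_, ?_, ?_⟩ <;> intros <;> simp
  smul_mem' := by
    rintro c a ⟨ha1, ha2, ha3⟩
    refine ⟨?_, ?_, ?_⟩
    · intro n k l α β hα hβ hkl h₁ h₂
      simp only [Pi.smul_apply, LinearMap.smul_apply, ha1 n k l α β hα hβ hkl h₁ h₂]
    · intro n β hβ h₁ h₂
      simp only [Pi.smul_apply, LinearMap.smul_apply, ha2 n β hβ h₁ h₂]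
    · intro n β hβ h₁ h₂
      simp only [Pi.smul_apply, LinearMap.smul_apply, ha3 n β hβ h₁ h₂, smul_eq_mul]
      ring

lemma ndeg_list_prod {n : ℕ} (l : List (SB n)) : ndeg l.prod = (l.map ndeg).sum := by
  induction l with
  | nil => simpa using ndeg_one
  | cons a l ih => simp [ndeg_mul, ih]

lemma mem_expr {m d : ℕ} (α : Fin (d + 1) → SB m) (hα : ∀ j, α j ∈ SdB 0 m)
    (idx : Fin d → Fin (m - 1)) :
    (α 0 * (List.ofFn fun j : Fin d => sτ (idx j) * α j.succ).prod) ∈ SdB d m := by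
  refine mem_SdB ?_
  rw [ndeg_mul, ndeg_list_prod, List.map_ofFn, hα 0]
  have h : (fun j : Fin d => ndeg (sτ (idx j) * α j.succ)) = fun _ => 1 := by
    funext j; rw [ndeg_mul, ndeg_sτ, hα j.succ]
  rw [show ndeg ∘ (fun j : Fin d => sτ (idx j) * α j.succ)
      = fun j : Fin d => ndeg (sτ (idx j) * α j.succ) from rfl, h]
  simp

lemma mem_exprS {m d : ℕ} (α : Fin (d + 1) → SB m) (hα : ∀ j, α j ∈ SdB 0 m)
    (idx : Fin d → Fin (m - 1)) (S : Finset (Fin d)) :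
    (α 0 * (List.ofFn fun j : Fin d =>
      (if j ∈ S then sσ (idx j) else 1) * α j.succ).prod) ∈ SdB 0 m := by
  refine mem_SdB ?_
  rw [ndeg_mul, ndeg_list_prod, List.map_ofFn, hα 0]
  have h : (fun j : Fin d => ndeg ((if j ∈ S then sσ (idx j) else 1) * α j.succ))
      = fun _ => 0 := by
    funext j
    rw [ndeg_mul, hα j.succ]
    split <;> simp [ndeg_sσ, ndeg_one]
  rw [show ndeg ∘ (fun j : Fin d => (if j ∈ S then sσ (idx j) else 1) * α j.succ)
      = fun j : Fin d => ndeg ((if j ∈ S then sσ (idx j) else 1) * α j.succ) from rfl, h]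
  simp

lemma mem_tau_pow {n : ℕ} (i : Fin (n - 1)) (d : ℕ) : (sτ i) ^ d ∈ SdB d n := by
  refine mem_SdB ?_; simp [ndeg_pow, ndeg_sτ]

lemma mem_tau_pow_sigma {n : ℕ} (i i' : Fin (n - 1)) (d : ℕ) :
    (sτ i) ^ d * sσ i' ∈ SdB d n := by
  refine mem_SdB ?_; simp [ndeg_mul, ndeg_pow, ndeg_sτ, ndeg_sσ]

lemma mem_tau_tau {n : ℕ} (i i' : Fin (n - 1)) (a b : ℕ) :
    (sτ i) ^ a * (sτ i') ^ b ∈ SdB (a + b) n := by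
  refine mem_SdB ?_; simp [ndeg_mul, ndeg_pow, ndeg_sτ]

lemma mem_tau_tau_sigma {n : ℕ} (i i' i'' : Fin (n - 1)) (a b : ℕ) :
    (sτ i) ^ a * (sτ i') ^ b * sσ i'' ∈ SdB (a + b) n := by
  refine mem_SdB ?_; simp [ndeg_mul, ndeg_pow, ndeg_sτ, ndeg_sσ]

/-- `σ_{i+1}` with out-of-range indices interpreted as `1`. -/
def sσ' (n : ℕ) (i : ℕ) : SB n := if h : i < n - 1 then sσ ⟨i, h⟩ else 1

/-- `descChain n m = σ_{n-1} σ_{n-2} ⋯ σ_{n-m}` (1-indexed), `m` letters. -/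
def descChain (n : ℕ) : ℕ → SB n
  | 0 => 1
  | m + 1 => descChain n m * sσ' n (n - 2 - m)

/-- The sets `ℬ_n` describing the standard basis of the Hecke algebra `H(B_n)`:
`ℬ_1 = {1}` and `ℬ_n = {β u : β ∈ ℬ_{n-1}, u ∈ U_n}` where
`U_n = {1, σ_{n-1}, σ_{n-1}σ_{n-2}, …, σ_{n-1}⋯σ_1}`. -/
def Bset : (n : ℕ) → Set (SB n)
  | 0 => {1}
  | n + 1 => {x | ∃ β ∈ Bset n, ∃ m ≤ n, x = incl β * descChain (n + 1) m}

/-- The set `𝒞_{d,n}` of singular braids of the form `τ_{i_1} ⋯ τ_{i_d} β` with `β ∈ ℬ_n`. -/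
def Cdn (d n : ℕ) : Set (SB n) :=
  {x | ∃ idx : Fin d → Fin (n - 1), ∃ β ∈ Bset n,
    x = (List.ofFn fun j : Fin d => sτ (idx j)).prod * β}

/-! The element `e = σ_i + σ_j - (q - 1)` intertwines the two singular generators,
`e τ_i = τ_j e`, hence `e τ_i ^ a = τ_j ^ a e`; as `σ_i` commutes with `τ_i`, the claim is this
identity rearranged. Since `σ⁻¹ = q⁻¹ (σ - (q - 1))`, the mixed braid relations for `(i, j)` and
`(j, i)` read `σ_i⁻¹ τ_j σ_i = σ_j τ_i σ_j⁻¹` and `σ_j⁻¹ τ_i σ_j = σ_i τ_j σ_i⁻¹`; after clearing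
denominators, their sum is `q - 1` times `τ_j σ_i + τ_i σ_j = σ_j τ_i + σ_i τ_j`, and this
together with one of them gives the intertwining. -/

section HeckeIntertwining

variable {k R : Type*} [Field k] [Ring R] [Algebra k R] {Q : k} {s t T U : R}

lemma sub_smul_one_mul_self_of_hecke (hs : s * s = (Q - 1) • s + Q • 1) :
    (s - (Q - 1) • 1) * s = Q • 1 := by
  rw [sub_mul, hs, smul_one_mul, add_sub_cancel_left]

lemma mul_sub_smul_one_self_of_hecke (hs : s * s = (Q - 1) • s + Q • 1) :
    s * (s - (Q - 1) • 1) = Q • 1 := by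
  rw [mul_sub, hs, mul_smul_one, add_sub_cancel_left]

lemma isUnit_of_hecke (hQ : Q ≠ 0) (hs : s * s = (Q - 1) • s + Q • 1) : IsUnit s := by
  refine ⟨⟨s, Q⁻¹ • (s - (Q - 1) • 1), ?_, ?_⟩, rfl⟩
  · rw [mul_smul_comm, mul_sub_smul_one_self_of_hecke hs, smul_smul, inv_mul_cancel₀ hQ, one_smul]
  · rw [smul_mul_assoc, sub_smul_one_mul_self_of_hecke hs, smul_smul, inv_mul_cancel₀ hQ,
      one_smul]

lemma hecke_conj_of_braid (hQ : Q ≠ 0) (hs : s * s = (Q - 1) • s + Q • 1)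
    (ht : t * t = (Q - 1) • t + Q • 1) (hbr : s * t * T = U * s * t) :
    (s - (Q - 1) • 1) * U * s = t * T * (t - (Q - 1) • 1) := by
  refine (isUnit_of_hecke hQ ht).mul_right_cancel ?_
  calc (s - (Q - 1) • 1) * U * s * t
      = (s - (Q - 1) • 1) * s * t * T := by simp only [mul_assoc, ← hbr]
    _ = t * T * ((t - (Q - 1) • 1) * t) := by
        rw [sub_smul_one_mul_self_of_hecke hs, sub_smul_one_mul_self_of_hecke ht, smul_one_mul,
          mul_smul_one, smul_mul_assoc]
    _ = t * T * (t - (Q - 1) • 1) * t := by simp only [mul_assoc]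

lemma hecke_add_comm_of_braid (hQ : Q ≠ 0) (hQ1 : Q ≠ 1) (hs : s * s = (Q - 1) • s + Q • 1)
    (ht : t * t = (Q - 1) • t + Q • 1) (hst : s * t * T = U * s * t)
    (hts : t * s * U = T * t * s) :
    U * s + T * t = t * T + s * U := by
  have hst' := hecke_conj_of_braid hQ hs ht hst
  have hts' := hecke_conj_of_braid hQ ht hs hts
  refine (isUnit_iff_ne_zero.mpr (sub_ne_zero.mpr hQ1)).smul_left_cancel.mp (sub_eq_zero.mp ?_)
  calc (Q - 1) • (U * s + T * t) - (Q - 1) • (t * T + s * U)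
      = (t * T * (t - (Q - 1) • 1) - (s - (Q - 1) • 1) * U * s)
        + (s * U * (s - (Q - 1) • 1) - (t - (Q - 1) • 1) * T * t) := by
        simp only [mul_sub, sub_mul, smul_mul_assoc, mul_smul_comm, mul_one, one_mul, smul_add,
          mul_assoc]
        abel
    _ = 0 := by rw [hst', hts', sub_self, sub_self, add_zero]

lemma hecke_semiconjBy_of_braid (hQ : Q ≠ 0) (hQ1 : Q ≠ 1)
    (hs : s * s = (Q - 1) • s + Q • 1) (ht : t * t = (Q - 1) • t + Q • 1)
    (hst : s * t * T = U * s * t) (hts : t * s * U = T * t * s) :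
    SemiconjBy (s + t - (Q - 1) • 1) T U := by
  have hsum := hecke_add_comm_of_braid hQ hQ1 hs ht hst hts
  refine (isUnit_of_hecke hQ hs).mul_left_cancel ?_
  calc s * ((s + t - (Q - 1) • 1) * T)
      = s * s * T + s * t * T - (Q - 1) • (s * T) := by
        simp only [mul_add, add_mul, mul_sub, sub_mul, smul_mul_assoc, mul_smul_comm, one_mul,
          mul_assoc]
    _ = Q • T + U * s * t := by
        rw [hs, hst, add_mul, smul_mul_assoc, smul_mul_assoc, one_mul]
        abel
    _ = Q • T + (U * s + T * t) * t - T * (t * t) := by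
        rw [add_mul, mul_assoc T]
        abel
    _ = (t - (Q - 1) • 1) * T * t + s * U * t := by
        rw [hsum, ht]
        simp only [add_mul, sub_mul, mul_add, smul_mul_assoc, mul_smul_comm, one_mul, mul_one,
          mul_assoc]
        abel
    _ = s * (U * (s + t - (Q - 1) • 1)) := by
        rw [hecke_conj_of_braid hQ ht hs hts]
        simp only [mul_add, mul_sub, mul_smul_comm, mul_one, mul_assoc]
        abel

end HeckeIntertwining

section SingularHecke

variable {n : ℕ}

lemma SBcon_mk'_eq_of_rel {w₁ w₂ : FreeMonoid (SBGen n)} (h : SBRel n w₁ w₂) :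
    (SBcon n).mk' w₁ = (SBcon n).mk' w₂ :=
  (Con.eq _).mpr (ConGen.Rel.of _ _ h)

lemma ιH_mul (α β : SB n) : ιH (α * β) = ιH α * ιH β := by
  rw [ιH, ιH, ιH, map_mul, map_mul]
  rfl

lemma sσ_mul_sτ (i : Fin (n - 1)) : sσ i * sτ i = sτ i * sσ i := by
  have h := SBcon_mk'_eq_of_rel (SBRel.sigma_tau i)
  rw [map_mul, map_mul] at h
  exact h

lemma sσ_mul_sσ_mul_sτ {i j : Fin (n - 1)} (h : adj i j) :
    sσ i * sσ j * sτ i = sτ j * sσ i * sσ j := by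
  have h' := SBcon_mk'_eq_of_rel (SBRel.braid_tau i j h)
  simp only [map_mul] at h'
  exact h'

lemma σH_mul_self (i : Fin (n - 1)) : σH i * σH i = (q - 1) • σH i + q • (1 : H n) := by
  have h : hrel n (MonoidAlgebra.of K (SB n) (sσ i) ^ 2)
      ((q - 1) • MonoidAlgebra.of K (SB n) (sσ i) + q • 1) := ⟨i, rfl, rfl⟩
  have h' := RingQuot.mkAlgHom_rel K h
  rw [map_pow, sq, map_add, map_smul, map_smul, map_one] at h'
  exact h'

lemma commute_σH_τH (i : Fin (n - 1)) : Commute (σH i) (τH i) := by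
  rw [Commute, SemiconjBy, σH, τH, ← ιH_mul, ← ιH_mul, sσ_mul_sτ]

lemma σH_mul_σH_mul_τH {i j : Fin (n - 1)} (h : adj i j) :
    σH i * σH j * τH i = τH j * σH i * σH j := by
  simp only [σH, τH, ← ιH_mul, sσ_mul_sσ_mul_sτ h]

lemma q_ne_zero : q ≠ 0 := RatFunc.X_ne_zero

lemma q_ne_one : q ≠ 1 := by
  intro h
  simpa [q] using congrArg RatFunc.intDegree h

lemma semiconjBy_σH_add_σH_τH {i j : Fin (n - 1)} (h : adj i j) :
    SemiconjBy (σH i + σH j - cK (q - 1)) (τH i) (τH j) := by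
  rw [cK, Algebra.algebraMap_eq_smul_one]
  exact hecke_semiconjBy_of_braid q_ne_zero q_ne_one (σH_mul_self i) (σH_mul_self j)
    (σH_mul_σH_mul_τH h) (σH_mul_σH_mul_τH h.symm)

end SingularHecke

theorem statement9_general (n : ℕ) (i j : Fin (n - 1)) (hij : adj i j)
    (a : ℕ) :
    σH j * τH i ^ a
      = τH j ^ a * (σH i + σH j - cK (q - 1)) - τH i ^ a * (σH i - cK (q - 1)) := by
  rw [← ((semiconjBy_σH_add_σH_τH hij).pow_right a).eq, sub_mul, add_mul,
    ((commute_σH_τH i).pow_right a).eq, mul_sub, cK, Algebra.commutes]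
  abel

/-- For `|i-j| = 1` and `a ≥ 1`, in `H(SB_n)`:
`σ_j τ_i^a = τ_j^a (σ_i + σ_j − (q−1)) − τ_i^a (σ_i − (q−1))`. -/
theorem statement9 (n : ℕ) (hn : 3 ≤ n) (i j : Fin (n - 1)) (hij : adj i j)
    (a : ℕ) (ha : 1 ≤ a) :
    σH j * τH i ^ a
      = τH j ^ a * (σH i + σH j - cK (q - 1)) - τH i ^ a * (σH i - cK (q - 1)) :=
  statement9_general n i j hij a
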